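/- Let T⁻ be a nondegenerate triangle with vertices x₁, x₂, x₃ and barycentric coordinates λᵢ. For 0 < β < 3/2, define ψᵢ⁻ = 6λᵢλ₃(x₃ − xᵢ) + β(−1)^i λ₁λ₂(x₂ − x₁) and φᵢ⁻ = λᵢ∇λ₃ − λ₃∇λᵢ for i = 1, 2. Then the 2×2 matrix M⁻ with entries M⁻ᵢⱼ = ∫_{T⁻} ψᵢ⁻ · φⱼ⁻ dx equals |T⁻| times the matrix with diagonal entries (24 − β)/60 and off-diagonal entries (6 + β)/60, and both its eigenvalues exceed |T⁻|/4. -/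

import Mathlib

/-!
Since `⟪xₐ - x_b, ∇λₖ⟫ = δₖₐ - δₖ_b`, each integrand `ψᵢ⁻ · φⱼ⁻` is a cubic polynomial in the
barycentric coordinates. Pulling back along the affine map from the reference triangle
`{s, t ≥ 0, s + t ≤ 1}` (Jacobian `2|T⁻|`) turns its integral into an iterated polynomial integral,
giving `∫ λᵢ²λⱼ = |T⁻|/30` for `i ≠ j` and `∫ λ₁λ₂λ₃ = |T⁻|/60`. The matrix `!![a, b; b, a]` has
eigenvalues `a ± b`, here `|T⁻|/2` and `|T⁻|(18 - 2β)/60`, and the latter exceeds `|T⁻|/4` exactly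
when `β < 3/2`.
-/

open MeasureTheory Matrix
open scoped RealInnerProductSpace
open Set

local notation "ℝ²" => EuclideanSpace ℝ (Fin 2)

def stdTriangle : Set (ℝ × ℝ) := {q | 0 ≤ q.1 ∧ 0 ≤ q.2 ∧ q.1 + q.2 ≤ 1}

theorem convexHull_stdTriangle :
    convexHull ℝ {((0 : ℝ), (0 : ℝ)), (1, 0), (0, 1)} = stdTriangle := by
  refine (convexHull_min ?_ ?_).antisymm fun q ⟨hs, ht, hst⟩ => ?_
  · rintro q (rfl | rfl | rfl) <;> norm_num [stdTriangle]
  · rintro ⟨a₁, a₂⟩ ⟨ha₁, ha₂, ha⟩ ⟨b₁, b₂⟩ ⟨hb₁, hb₂, hb⟩ s t hs ht hst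
    simp only [stdTriangle, Prod.smul_mk, Prod.mk_add_mk, smul_eq_mul]
    exact ⟨by positivity, by positivity, by nlinarith⟩
  · have hq : q = ∑ i, ![1 - q.1 - q.2, q.1, q.2] i • ![((0 : ℝ), (0 : ℝ)), (1, 0), (0, 1)] i := by
      ext <;> simp [Fin.sum_univ_three]
    rw [hq]
    refine (convex_convexHull ℝ _).sum_mem (fun i _ => ?_) ?_ fun i _ => subset_convexHull ℝ _ ?_
    · fin_cases i <;> simp <;> linarith
    · simp only [Fin.sum_univ_three, cons_val_zero, cons_val_one, cons_val_two, tail_cons,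
        head_cons]
      ring
    · fin_cases i <;> simp

theorem isCompact_stdTriangle : IsCompact stdTriangle :=
  convexHull_stdTriangle ▸ (toFinite _).isCompact_convexHull (𝕜 := ℝ)

theorem setIntegral_stdTriangle {f : ℝ × ℝ → ℝ} (hf : Continuous f) :
    ∫ q in stdTriangle, f q = ∫ s in (0)..1, ∫ t in (0)..(1 - s), f (s, t) := by
  have hslice : ∀ s, ∫ t, stdTriangle.indicator f (s, t) =
      (Icc 0 1).indicator (fun s => ∫ t in (0)..(1 - s), f (s, t)) s := by
    intro s
    by_cases hs : s ∈ Icc (0 : ℝ) 1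
    · have : ∀ t, stdTriangle.indicator f (s, t) =
          (Icc 0 (1 - s)).indicator (fun t => f (s, t)) t := fun t => by
        simp only [indicator_apply, stdTriangle, mem_ofPred_eq, mem_Icc, hs.1, true_and,
          le_sub_iff_add_le']
      simp only [this, integral_indicator measurableSet_Icc, indicator_of_mem hs,
        integral_Icc_eq_integral_Ioc, ← intervalIntegral.integral_of_le (sub_nonneg.2 hs.2)]
    · have : ∀ t, stdTriangle.indicator f (s, t) = 0 := fun t =>
        indicator_of_notMem (fun h => hs ⟨h.1, by linarith [h.2.1, h.2.2]⟩) _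
      simp only [this, integral_zero, indicator_of_notMem hs]
  have hint : Integrable (stdTriangle.indicator f) (volume.prod volume) :=
    (integrable_indicator_iff isCompact_stdTriangle.measurableSet).2
      (hf.continuousOn.integrableOn_compact isCompact_stdTriangle)
  rw [← integral_indicator isCompact_stdTriangle.measurableSet, Measure.volume_eq_prod,
    integral_prod _ hint]
  simp only [hslice, integral_indicator measurableSet_Icc, integral_Icc_eq_integral_Ioc,
    ← intervalIntegral.integral_of_le zero_le_one]

theorem intervalIntegral_quartic (b c₀ c₁ c₂ c₃ c₄ : ℝ) :
    ∫ t in (0)..b, (c₀ + c₁ * t + c₂ * t ^ 2 + c₃ * t ^ 3 + c₄ * t ^ 4) =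
      c₀ * b + c₁ * b ^ 2 / 2 + c₂ * b ^ 3 / 3 + c₃ * b ^ 4 / 4 + c₄ * b ^ 5 / 5 := by
  have hi : ∀ f : ℝ → ℝ, Continuous f → IntervalIntegrable f volume 0 b :=
    fun f hf => hf.intervalIntegrable _ _
  rw [intervalIntegral.integral_add (hi _ (by fun_prop)) (hi _ (by fun_prop)),
    intervalIntegral.integral_add (hi _ (by fun_prop)) (hi _ (by fun_prop)),
    intervalIntegral.integral_add (hi _ (by fun_prop)) (hi _ (by fun_prop)),
    intervalIntegral.integral_add (hi _ (by fun_prop)) (hi _ (by fun_prop))]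
  simp only [intervalIntegral.integral_const_mul, integral_pow, intervalIntegral.integral_const]
  rw [intervalIntegral.integral_const_mul, integral_id]
  ring

theorem setIntegral_stdTriangle_cubic {F : ℝ → ℝ → ℝ → ℝ} {k p r w : ℝ}
    (hF : ∀ a b c, F a b c = k + p * (a ^ 2 * c + a * c ^ 2) + r * (b ^ 2 * c + b * c ^ 2) +
      w * (a * b * c)) :
    ∫ q in stdTriangle, F (1 - q.1 - q.2) q.1 q.2 = k / 2 + p / 30 + r / 30 + w / 120 := by
  simp only [hF]
  rw [setIntegral_stdTriangle (by fun_prop), intervalIntegral.integral_congr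
    (g := fun s => (k + p / 6) + (r / 3 + w / 6 - k - 2 * p / 3) * s +
      (p - r / 2 - w / 2) * s ^ 2 + (w / 2 - 2 * p / 3) * s ^ 3 + (p + r - w) / 6 * s ^ 4)
    fun s _ => ?_, intervalIntegral_quartic]
  · ring
  · rw [intervalIntegral.integral_congr (g := fun t => k +
      (p * (1 - s) ^ 2 + r * s ^ 2 + w * s * (1 - s)) * t + (r * s - w * s - p * (1 - s)) * t ^ 2 +
      0 * t ^ 3 + 0 * t ^ 4) fun t _ => by ring, intervalIntegral_quartic]
    ring

section Triangle

variable (x : Fin 3 → ℝ²)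

noncomputable def triangleMap : ℝ × ℝ →ᵃ[ℝ] ℝ² :=
  ((LinearMap.fst ℝ ℝ ℝ).smulRight (x 1 - x 0) +
    (LinearMap.snd ℝ ℝ ℝ).smulRight (x 2 - x 0)).toAffineMap + AffineMap.const ℝ (ℝ × ℝ) (x 0)

theorem triangleMap_apply (q : ℝ × ℝ) :
    triangleMap x q = q.1 • (x 1 - x 0) + q.2 • (x 2 - x 0) + x 0 := rfl

theorem image_triangleMap_stdTriangle :
    triangleMap x '' stdTriangle = convexHull ℝ (range x) := by
  have hx : range x = {x 0, x 1, x 2} := by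
    ext
    simp [Fin.exists_fin_succ, eq_comm]
  rw [← convexHull_stdTriangle, AffineMap.image_convexHull, hx]
  simp [image_insert_eq, triangleMap_apply]

theorem apply_triangleMap (f : ℝ² →ᵃ[ℝ] ℝ) (q : ℝ × ℝ) :
    f (triangleMap x q) = f (x 0) + q.1 * (f (x 1) - f (x 0)) + q.2 * (f (x 2) - f (x 0)) := by
  rw [triangleMap_apply, ← vadd_eq_add, f.map_vadd, map_add, map_smul, map_smul,
    ← vsub_eq_sub, ← vsub_eq_sub, f.linearMap_vsub, f.linearMap_vsub]
  simp only [vadd_eq_add, vsub_eq_sub, smul_eq_mul]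
  ring

def euclideanCoords : ℝ² ≃ᵐ ℝ × ℝ :=
  (MeasurableEquiv.toLp 2 (Fin 2 → ℝ)).symm.trans MeasurableEquiv.finTwoArrow

theorem measurePreserving_euclideanCoords : MeasurePreserving euclideanCoords volume volume :=
  (volume_preserving_finTwoArrow ℝ).comp
    (EuclideanSpace.volume_preserving_symm_measurableEquiv_toLp (Fin 2))

noncomputable def triangleLinearMap : ℝ² →L[ℝ] ℝ² :=
  (EuclideanSpace.proj 0).smulRight (x 1 - x 0) + (EuclideanSpace.proj 1).smulRight (x 2 - x 0)

theorem triangleMap_euclideanCoords (p : ℝ²) :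
    triangleMap x (euclideanCoords p) = triangleLinearMap x p + x 0 := rfl

variable {x} {lam : Fin 3 → (ℝ² →ᵃ[ℝ] ℝ)}

theorem barycentric_triangleMap (hlam : ∀ i j, lam i (x j) = if i = j then 1 else 0)
    (q : ℝ × ℝ) :
    lam 0 (triangleMap x q) = 1 - q.1 - q.2 ∧ lam 1 (triangleMap x q) = q.1 ∧
      lam 2 (triangleMap x q) = q.2 := by
  simp only [apply_triangleMap, hlam, Fin.reduceEq, if_true, if_false]
  exact ⟨by ring, by ring, by ring⟩

theorem triangleMap_injective (hlam : ∀ i j, lam i (x j) = if i = j then 1 else 0) :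
    Function.Injective (triangleMap x) := fun q q' h =>
  Prod.ext (by simpa only [(barycentric_triangleMap hlam _).2.1] using congrArg (lam 1) h)
    (by simpa only [(barycentric_triangleMap hlam _).2.2] using congrArg (lam 2) h)

theorem det_triangleLinearMap_ne_zero (hlam : ∀ i j, lam i (x j) = if i = j then 1 else 0) :
    (triangleLinearMap x).det ≠ 0 := by
  have hinj : Function.Injective (triangleLinearMap x) := fun p p' h =>
    euclideanCoords.injective <| triangleMap_injective hlam <| by
      rw [triangleMap_euclideanCoords, triangleMap_euclideanCoords, h]
  exact ((LinearMap.isUnit_iff_isUnit_det _).1 <| (Module.End.isUnit_iff _).2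
    ⟨hinj, LinearMap.injective_iff_surjective.1 hinj⟩).ne_zero

theorem setIntegral_convexHull_barycentric (hlam : ∀ i j, lam i (x j) = if i = j then 1 else 0)
    (F : ℝ → ℝ → ℝ → ℝ) :
    ∫ z in convexHull ℝ (range x), F (lam 0 z) (lam 1 z) (lam 2 z) =
      |(triangleLinearMap x).det| * ∫ q in stdTriangle, F (1 - q.1 - q.2) q.1 q.2 := by
  have hderiv : ∀ p ∈ euclideanCoords ⁻¹' stdTriangle,
      HasFDerivWithinAt (triangleMap x ∘ euclideanCoords) (triangleLinearMap x)
        (euclideanCoords ⁻¹' stdTriangle) p :=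
    fun p _ => ((triangleLinearMap x).hasFDerivAt.add_const (x 0)).hasFDerivWithinAt
  have himage : triangleMap x ∘ euclideanCoords '' (euclideanCoords ⁻¹' stdTriangle) =
      convexHull ℝ (range x) := by
    rw [image_comp, euclideanCoords.image_preimage, image_triangleMap_stdTriangle]
  rw [← himage, integral_image_eq_integral_abs_det_fderiv_smul volume
      (isCompact_stdTriangle.measurableSet.preimage euclideanCoords.measurable) hderiv
      ((triangleMap_injective hlam).comp euclideanCoords.injective).injOn,
    integral_smul, smul_eq_mul, Function.comp_def,
    measurePreserving_euclideanCoords.setIntegral_preimage_emb euclideanCoords.measurableEmbedding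
      (fun q => F (lam 0 (triangleMap x q)) (lam 1 (triangleMap x q)) (lam 2 (triangleMap x q)))]
  simp only [barycentric_triangleMap hlam]

theorem toReal_volume_convexHull (hlam : ∀ i j, lam i (x j) = if i = j then 1 else 0) :
    (volume (convexHull ℝ (range x))).toReal = |(triangleLinearMap x).det| / 2 := by
  have h := setIntegral_convexHull_barycentric hlam fun _ _ _ => 1
  rw [setIntegral_const, smul_eq_mul, mul_one, setIntegral_stdTriangle_cubic
    (F := fun _ _ _ => 1) (k := 1) (p := 0) (r := 0) (w := 0) fun _ _ _ => by ring] at h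
  rw [← measureReal_def, h]
  ring

theorem toReal_volume_convexHull_pos (hlam : ∀ i j, lam i (x j) = if i = j then 1 else 0) :
    0 < (volume (convexHull ℝ (range x))).toReal := by
  rw [toReal_volume_convexHull hlam]
  have := det_triangleLinearMap_ne_zero hlam
  positivity

theorem setIntegral_convexHull_cubic (hlam : ∀ i j, lam i (x j) = if i = j then 1 else 0)
    (p r w : ℝ) :
    ∫ z in convexHull ℝ (range x), (p * (lam 0 z ^ 2 * lam 2 z + lam 0 z * lam 2 z ^ 2) +
        r * (lam 1 z ^ 2 * lam 2 z + lam 1 z * lam 2 z ^ 2) + w * (lam 0 z * lam 1 z * lam 2 z)) =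
      (volume (convexHull ℝ (range x))).toReal * (p / 15 + r / 15 + w / 60) := by
  let F : ℝ → ℝ → ℝ → ℝ := fun a b c =>
    p * (a ^ 2 * c + a * c ^ 2) + r * (b ^ 2 * c + b * c ^ 2) + w * (a * b * c)
  show ∫ z in _, F (lam 0 z) (lam 1 z) (lam 2 z) = _
  rw [setIntegral_convexHull_barycentric hlam F,
    setIntegral_stdTriangle_cubic (F := F) (k := 0) (p := p) (r := r) (w := w)
      fun _ _ _ => by simp only [F]; ring,
    toReal_volume_convexHull hlam]
  ring

end Triangle

section Macroelement

variable (x : Fin 3 → ℝ²) (lam : Fin 3 → (ℝ² →ᵃ[ℝ] ℝ)) (g : Fin 3 → ℝ²) (β : ℝ)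

/-- The paper's vertices `x₁, x₂, x₃` are `x 0, x 1, x 2`, and its index `i ∈ {1, 2}` of `ψᵢ⁻`
and `φᵢ⁻` is `i + 1` for `i : Fin 2`. -/
noncomputable def psi (i : Fin 2) (p : ℝ²) : ℝ² :=
  (6 * lam i.castSucc p * lam 2 p) • (x 2 - x i.castSucc) +
    ((-1 : ℝ) ^ ((i : ℕ) + 1) * β * lam 0 p * lam 1 p) • (x 1 - x 0)

noncomputable def phi (j : Fin 2) (p : ℝ²) : ℝ² :=
  lam j.castSucc p • g 2 - lam 2 p • g j.castSucc

variable {lam g}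

theorem inner_sub_gradient (hg : ∀ i p, lam i p = lam i 0 + ⟪g i, p⟫) (k : Fin 3) (p q : ℝ²) :
    ⟪p - q, g k⟫ = lam k p - lam k q := by
  rw [hg k p, hg k q, real_inner_comm, inner_sub_right]
  ring

theorem inner_psi_phi (hlam : ∀ i j, lam i (x j) = if i = j then 1 else 0)
    (hg : ∀ i p, lam i p = lam i 0 + ⟪g i, p⟫) (i j : Fin 2) (p : ℝ²) :
    ⟪psi x lam β i p, phi lam g j p⟫ =
      !![6, 0; 0, 0] i j * (lam 0 p ^ 2 * lam 2 p + lam 0 p * lam 2 p ^ 2) +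
        !![0, 0; 0, 6] i j * (lam 1 p ^ 2 * lam 2 p + lam 1 p * lam 2 p ^ 2) +
        !![-β, 6 + β; 6 + β, -β] i j * (lam 0 p * lam 1 p * lam 2 p) := by
  simp only [psi, phi, inner_add_left, inner_sub_right, real_inner_smul_left,
    real_inner_smul_right, inner_sub_gradient hg, hlam]
  fin_cases i <;> fin_cases j <;> simp <;> ring

end Macroelement

theorem Matrix.eq_add_or_eq_sub_of_hasEigenvalue {R : Type*} [CommRing R] [IsDomain R]
    {a b μ : R} (h : Module.End.HasEigenvalue (toLin' !![a, b; b, a]) μ) :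
    μ = a + b ∨ μ = a - b := by
  obtain ⟨v, hv⟩ := h.exists_hasEigenvector
  have hMv : !![a, b; b, a] *ᵥ v = μ • v := by rw [← toLin'_apply, hv.apply_eq_smul]
  have h₀ : a * v 0 + b * v 1 = μ * v 0 := by
    simpa [mulVec, dotProduct, Fin.sum_univ_two] using congr_fun hMv 0
  have h₁ : b * v 0 + a * v 1 = μ * v 1 := by
    simpa [mulVec, dotProduct, Fin.sum_univ_two] using congr_fun hMv 1
  have hv₀ : (μ - (a + b)) * (μ - (a - b)) * v 0 = 0 := by
    linear_combination (a - μ) * h₀ - b * h₁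
  have hv₁ : (μ - (a + b)) * (μ - (a - b)) * v 1 = 0 := by
    linear_combination (a - μ) * h₁ - b * h₀
  by_contra! hne
  have hchar : (μ - (a + b)) * (μ - (a - b)) ≠ 0 :=
    mul_ne_zero (sub_ne_zero.2 hne.1) (sub_ne_zero.2 hne.2)
  refine hv.2 (funext fun i => ?_)
  fin_cases i
  exacts [(mul_eq_zero.1 hv₀).resolve_left hchar, (mul_eq_zero.1 hv₁).resolve_left hchar]

theorem macroelement_interior_matrix_general (x : Fin 3 → EuclideanSpace ℝ (Fin 2))
    (lam : Fin 3 → (EuclideanSpace ℝ (Fin 2) →ᵃ[ℝ] ℝ))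
    (hlam : ∀ i j, lam i (x j) = if i = j then 1 else 0)
    (g : Fin 3 → EuclideanSpace ℝ (Fin 2))
    (hg : ∀ i p, lam i p = lam i 0 + ⟪g i, p⟫)
    (β : ℝ) (hβ' : β < 3 / 2)
    (M : Matrix (Fin 2) (Fin 2) ℝ)
    (hM : ∀ i j : Fin 2, M i j =
      ∫ p in convexHull ℝ (Set.range x),
        ⟪(6 * lam i.castSucc p * lam 2 p) • (x 2 - x i.castSucc) +
            ((-1 : ℝ) ^ ((i : ℕ) + 1) * β * lam 0 p * lam 1 p) • (x 1 - x 0),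
          lam j.castSucc p • g 2 - lam 2 p • g j.castSucc⟫) :
    M = (volume (convexHull ℝ (Set.range x))).toReal •
        !![(24 - β) / 60, (6 + β) / 60; (6 + β) / 60, (24 - β) / 60] ∧
      ∀ μ : ℝ, Module.End.HasEigenvalue (Matrix.toLin' M) μ →
        (volume (convexHull ℝ (Set.range x))).toReal / 4 < μ := by
  have hT : MeasurableSet (convexHull ℝ (range x)) :=
    ((toFinite _).isCompact_convexHull (𝕜 := ℝ)).measurableSet
  have hMeq : M = (volume (convexHull ℝ (Set.range x))).toReal •
      !![(24 - β) / 60, (6 + β) / 60; (6 + β) / 60, (24 - β) / 60] := by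
    ext i j
    rw [hM]
    refine (setIntegral_congr_fun hT fun p _ => inner_psi_phi x β hlam hg i j p).trans ?_
    rw [setIntegral_convexHull_cubic hlam, Matrix.smul_apply, smul_eq_mul]
    congr 1
    fin_cases i <;> fin_cases j <;> norm_num <;> ring
  refine ⟨hMeq, fun μ hμ => ?_⟩
  have hvol := toReal_volume_convexHull_pos (x := x) hlam
  simp only [hMeq, smul_of, smul_cons, smul_eq_mul, Matrix.smul_empty] at hμ
  rcases Matrix.eq_add_or_eq_sub_of_hasEigenvalue hμ with rfl | rfl <;> nlinarith

/-- The 2×2 matrix `M⁻ᵢⱼ = ∫_{T⁻} ψᵢ⁻ · φⱼ⁻ dx`, with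
`ψᵢ⁻ = 6λᵢλ₃(x₃-xᵢ) + β(-1)ⁱ λ₁λ₂(x₂-x₁)` and `φⱼ⁻ = λⱼ∇λ₃ - λ₃∇λⱼ`, equals
`|T⁻| • !![(24-β)/60, (6+β)/60; (6+β)/60, (24-β)/60]`, and for `0 < β < 3/2` both
its eigenvalues exceed `|T⁻|/4`.  (Vertices `x₁,x₂,x₃` are `x 0, x 1, x 2`; Lean
index `i : Fin 2` corresponds to the paper index `i+1`.) -/
theorem macroelement_interior_matrix (x : Fin 3 → EuclideanSpace ℝ (Fin 2))
    (hx : AffineIndependent ℝ x)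
    (lam : Fin 3 → (EuclideanSpace ℝ (Fin 2) →ᵃ[ℝ] ℝ))
    (hlam : ∀ i j, lam i (x j) = if i = j then 1 else 0)
    (g : Fin 3 → EuclideanSpace ℝ (Fin 2))
    (hg : ∀ i p, lam i p = lam i 0 + ⟪g i, p⟫)
    (β : ℝ) (hβ : 0 < β) (hβ' : β < 3 / 2)
    (M : Matrix (Fin 2) (Fin 2) ℝ)
    (hM : ∀ i j : Fin 2, M i j =
      ∫ p in convexHull ℝ (Set.range x),
        ⟪(6 * lam i.castSucc p * lam 2 p) • (x 2 - x i.castSucc) +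
            ((-1 : ℝ) ^ ((i : ℕ) + 1) * β * lam 0 p * lam 1 p) • (x 1 - x 0),
          lam j.castSucc p • g 2 - lam 2 p • g j.castSucc⟫) :
    M = (volume (convexHull ℝ (Set.range x))).toReal •
        !![(24 - β) / 60, (6 + β) / 60; (6 + β) / 60, (24 - β) / 60] ∧
      ∀ μ : ℝ, Module.End.HasEigenvalue (Matrix.toLin' M) μ →
        (volume (convexHull ℝ (Set.range x))).toReal / 4 < μ :=
  macroelement_interior_matrix_general x lam hlam g hg β hβ' M hM
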